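/- arXiv:2408.09352 — 6 statements merged into one kernel-verified Lean document; each statement's English description precedes it below -/
import Mathlib

section
/- Let Σ, Γ, Φ be finite nonempty alphabets and μ a probability distribution on Σ×Γ×Φ. If μ has no ℤ-embeddings, then μ is pairwise-connected. -/
open Finset

attribute [local instance] Classical.propDecidable

/-- The bipartite graph with parts `X` and `Y` where `x` is adjacent to `y` iff `adj x y`
is connected. -/
def BipartiteConnected {X Y : Type*} (adj : X → Y → Prop) : Prop :=
  (SimpleGraph.fromRel (fun a b : X ⊕ Y =>
    ∃ x y, a = Sum.inl x ∧ b = Sum.inr y ∧ adj x y)).Connected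

lemma bip_connected_of_no_emb {X Y : Type*} [Nonempty X] [Nonempty Y]
    (adj : X → Y → Prop) (hne : ∃ x y, adj x y)
    (h : ∀ (α : X → ℤ) (β : Y → ℤ), (∀ x y, adj x y → α x + β y = 0) →
      (∀ x x', α x = α x') ∧ (∀ y y', β y = β y')) :
    BipartiteConnected adj := by
  set G := SimpleGraph.fromRel (fun a b : X ⊕ Y =>
    ∃ x y, a = Sum.inl x ∧ b = Sum.inr y ∧ adj x y) with hG
  constructor
  intro a b
  by_contra hnr
  set f : X ⊕ Y → ℤ := fun v => if G.Reachable a v then 1 else 0 with hf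
  have hfadj : ∀ u v, G.Adj u v → f u = f v := by
    intro u v huv
    have : G.Reachable a u ↔ G.Reachable a v :=
      ⟨fun r => r.trans huv.reachable, fun r => r.trans huv.symm.reachable⟩
    simp only [hf]
    by_cases hu : G.Reachable a u
    · rw [if_pos hu, if_pos (this.mp hu)]
    · rw [if_neg hu, if_neg (fun hv => hu (this.mpr hv))]
  have hsum : ∀ x y, adj x y → f (Sum.inl x) + (-(f (Sum.inr y))) = 0 := by
    intro x y hxy
    have hAdj : G.Adj (Sum.inl x) (Sum.inr y) := by
      rw [hG, SimpleGraph.fromRel_adj]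
      exact ⟨by simp, Or.inl ⟨x, y, rfl, rfl, hxy⟩⟩
    rw [hfadj _ _ hAdj]; ring
  obtain ⟨hα, hβ⟩ := h (fun x => f (Sum.inl x)) (fun y => -(f (Sum.inr y))) hsum
  have hβ' : ∀ y y', f (Sum.inr y) = f (Sum.inr y') := by
    intro y y'; have := hβ y y'; omega
  obtain ⟨x0, y0, hxy0⟩ := hne
  have hbridge : f (Sum.inl x0) = f (Sum.inr y0) := by
    have := hsum x0 y0 hxy0; omega
  have hconst : ∀ u v, f u = f v := by
    intro u v
    rcases u with x | y <;> rcases v with x' | y'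
    · exact hα x x'
    · exact (hα x x0).trans (hbridge.trans (hβ' y0 y'))
    · exact ((hβ' y y0).trans hbridge.symm).trans (hα x0 x')
    · exact hβ' y y'
  have hfa : f a = 1 := by
    simp only [hf]; rw [if_pos (SimpleGraph.Reachable.refl a)]
  have hfb : f b = 0 := by
    simp only [hf]; rw [if_neg hnr]
  rw [hconst a b, hfb] at hfa
  exact one_ne_zero hfa.symm

/-- If `μ` has no `ℤ`-embeddings, then `μ` is pairwise-connected. -/
theorem no_Z_embeddings_implies_pairwise_connected
    {Xt Yt Zt : Type*} [Fintype Xt] [Fintype Yt] [Fintype Zt]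
    [Nonempty Xt] [Nonempty Yt] [Nonempty Zt]
    (μ : Xt × Yt × Zt → ℝ)
    (hμ0 : ∀ p, 0 ≤ μ p) (hμ1 : ∑ p, μ p = 1)
    (hemb : ∀ (α : Xt → ℤ) (β : Yt → ℤ) (γ : Zt → ℤ),
      (∀ x y z, 0 < μ (x, y, z) → α x + β y + γ z = 0) →
      ((∀ x x', α x = α x') ∧ (∀ y y', β y = β y') ∧ (∀ z z', γ z = γ z'))) :
    BipartiteConnected (fun x y => ∃ z, 0 < μ (x, y, z)) ∧
    BipartiteConnected (fun y z => ∃ x, 0 < μ (x, y, z)) ∧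
    BipartiteConnected (fun x z => ∃ y, 0 < μ (x, y, z)) := by
  have hsupp : ∃ p, 0 < μ p := by
    by_contra hc
    push_neg at hc
    have : ∑ p, μ p = 0 := Finset.sum_eq_zero (fun p _ => le_antisymm (hc p) (hμ0 p))
    rw [this] at hμ1; norm_num at hμ1
  obtain ⟨⟨x0, y0, z0⟩, hp0⟩ := hsupp
  refine ⟨?_, ?_, ?_⟩
  · refine bip_connected_of_no_emb _ ⟨x0, y0, z0, hp0⟩ (fun α β hab => ?_)
    obtain ⟨hα, hβ, -⟩ := hemb α β (fun _ => 0)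
      (fun x y z hμ => by simpa using hab x y ⟨z, hμ⟩)
    exact ⟨hα, hβ⟩
  · refine bip_connected_of_no_emb _ ⟨y0, z0, x0, hp0⟩ (fun β γ hab => ?_)
    obtain ⟨-, hβ, hγ⟩ := hemb (fun _ => 0) β γ
      (fun x y z hμ => by simpa using hab y z ⟨x, hμ⟩)
    exact ⟨hβ, hγ⟩
  · refine bip_connected_of_no_emb _ ⟨x0, z0, y0, hp0⟩ (fun α γ hab => ?_)
    obtain ⟨hα, -, hγ⟩ := hemb α (fun _ => 0) γ
      (fun x y z hμ => by simpa using hab x z ⟨y, hμ⟩)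
    exact ⟨hα, hγ⟩
end

section
/- Let Σ, Γ be finite nonempty alphabets, μ a probability distribution on Σ×Γ, m ≥ 2 an integer, and t : Σ×Γ → ℤ_m. Assume: (i) the bipartite graph with vertex parts Σ and Γ, in which x ∈ Σ is adjacent to y ∈ Γ iff (x,y) ∈ supp(μ), is connected; and (ii) the game has value less than 1, i.e., there are no f : Σ → ℤ_m, g : Γ → ℤ_m with f(x)+g(y) = t(x,y) for all (x,y) ∈ supp(μ). Let ω = exp(2πi/m) and T(x,y) = ω^{-t(x,y)}. Then there is a constant c > 0 such that for every n ≥ 1 and all functions F : Σ^n → 𝔻, G : Γ^n → 𝔻, |E_{(x,y)∼μ^{⊗n}}[F(x)·G(y)·Π_{i=1}^n T(x_i,y_i)]| ≤ 2^{-c·n}. -/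
open Finset

attribute [local instance] Classical.propDecidable

/-- The complex `m`-th root of unity `exp(2πi/m)`. -/
noncomputable def rootOfUnity' (m : ℕ) : ℂ := Complex.exp (2 * Real.pi * Complex.I / m)

/-! Write `A x y = μ (x, y) ω^{-t (x, y)}` and let `μ_X`, `μ_Y` be the marginals of `μ`.
Cauchy–Schwarz in each row gives `∑ₓ μ_X(x)⁻¹ |(A g)(x)|² ≤ ∑_y μ_Y(y) |g(y)|²`, and equality for
some `g ≠ 0` forces `ω^{-t (x, y)} g(y)` to depend only on `x` along the edges of the support.
Since the support graph is connected, the `m`-th power of this phase is constant, so after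
normalisation all phases are `m`-th roots of unity and their exponents form a perfect strategy,
which value `< 1` excludes. Compactness of the unit sphere turns the strict inequality into a
contraction factor `ρ < 1`, which tensorizes to `ρ^n` for the `n`-fold Kronecker power of `A`;
one more Cauchy–Schwarz over `x` bounds the correlation by `ρ^{n/2}`. -/

theorem sum_sum_mul_norm_sub_sq {ι E : Type*} [NormedAddCommGroup E] [InnerProductSpace ℝ E]
    (s : Finset ι) (w : ι → ℝ) (z : ι → E) :
    ∑ i ∈ s, ∑ j ∈ s, w i * w j * ‖z i - z j‖ ^ 2
      = 2 * ((∑ i ∈ s, w i) * ∑ i ∈ s, w i * ‖z i‖ ^ 2 - ‖∑ i ∈ s, w i • z i‖ ^ 2) := by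
  have hsq : ‖∑ i ∈ s, w i • z i‖ ^ 2 = ∑ i ∈ s, ∑ j ∈ s, w i * w j * inner ℝ (z i) (z j) := by
    simp only [← real_inner_self_eq_norm_sq, sum_inner, inner_sum, real_inner_smul_left,
      real_inner_smul_right]
    exact sum_congr rfl fun i _ => sum_congr rfl fun j _ => by rw [real_inner_comm]; ring
  calc ∑ i ∈ s, ∑ j ∈ s, w i * w j * ‖z i - z j‖ ^ 2
      = ∑ i ∈ s, ∑ j ∈ s, (w i * ‖z i‖ ^ 2 * w j + w i * (w j * ‖z j‖ ^ 2)
          - 2 * (w i * w j * inner ℝ (z i) (z j))) :=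
        sum_congr rfl fun i _ => sum_congr rfl fun j _ => by rw [norm_sub_sq_real]; ring
    _ = _ := by
        simp only [sum_add_distrib, sum_sub_distrib, ← sum_mul, ← mul_sum, hsq]
        ring

theorem norm_sum_smul_sq_le {ι E : Type*} [NormedAddCommGroup E] [InnerProductSpace ℝ E]
    {s : Finset ι} {w : ι → ℝ} (hw : ∀ i ∈ s, 0 ≤ w i) (z : ι → E) :
    ‖∑ i ∈ s, w i • z i‖ ^ 2 ≤ (∑ i ∈ s, w i) * ∑ i ∈ s, w i * ‖z i‖ ^ 2 := by
  have hgap : 0 ≤ ∑ i ∈ s, ∑ j ∈ s, w i * w j * ‖z i - z j‖ ^ 2 :=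
    sum_nonneg fun i hi => sum_nonneg fun j hj => by have := hw i hi; have := hw j hj; positivity
  linarith [sum_sum_mul_norm_sub_sq s w z]

theorem sum_smul_eq_of_norm_sum_smul_sq_eq {ι E : Type*} [NormedAddCommGroup E]
    [InnerProductSpace ℝ E] {s : Finset ι} {w : ι → ℝ} (hw : ∀ i ∈ s, 0 ≤ w i) {z : ι → E}
    (h : ‖∑ i ∈ s, w i • z i‖ ^ 2 = (∑ i ∈ s, w i) * ∑ i ∈ s, w i * ‖z i‖ ^ 2)
    {i : ι} (hi : i ∈ s) (hwi : 0 < w i) :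
    ∑ j ∈ s, w j • z j = (∑ j ∈ s, w j) • z i := by
  have hzero : ∑ i ∈ s, ∑ j ∈ s, w i * w j * ‖z i - z j‖ ^ 2 = 0 := by
    rw [sum_sum_mul_norm_sub_sq, h, sub_self, mul_zero]
  have hterm : ∀ j ∈ s, w i * w j * ‖z i - z j‖ ^ 2 = 0 := by
    have hnonneg : ∀ i ∈ s, ∀ j ∈ s, 0 ≤ w i * w j * ‖z i - z j‖ ^ 2 := fun i hi j hj => by
      have := hw i hi; have := hw j hj; positivity
    exact (sum_eq_zero_iff_of_nonneg fun j hj => hnonneg i hi j hj).1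
      ((sum_eq_zero_iff_of_nonneg fun i hi => sum_nonneg (hnonneg i hi)).1 hzero i hi)
  rw [sum_smul]
  refine sum_congr rfl fun j hj => ?_
  rcases (hw j hj).eq_or_lt with hwj | hwj
  · simp [← hwj]
  · have hzij : z i = z j := by simpa [hwi.ne', hwj.ne', sub_eq_zero] using hterm j hj
    rw [hzij]

theorem exists_lt_one_forall_le_mul_of_lt {E : Type*} [NormedAddCommGroup E] [NormedSpace ℝ E]
    [ProperSpace E] {Q N : E → ℝ} (hQ : Continuous Q) (hN : Continuous N)
    (hQ_smul : ∀ (c : ℝ) g, Q (c • g) = c ^ 2 * Q g)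
    (hN_smul : ∀ (c : ℝ) g, N (c • g) = c ^ 2 * N g)
    (hQ_nonneg : ∀ g, 0 ≤ Q g) (hlt : ∀ g, g ≠ 0 → Q g < N g) :
    ∃ ρ ∈ Set.Ioo (0 : ℝ) 1, ∀ g, Q g ≤ ρ * N g := by
  have hQ0 : Q 0 = 0 := by simpa using hQ_smul 0 0
  have hN0 : N 0 = 0 := by simpa using hN_smul 0 0
  have hN_pos : ∀ g, g ≠ 0 → 0 < N g := fun g hg => (hQ_nonneg g).trans_lt (hlt g hg)
  rcases subsingleton_or_nontrivial E with hE | hE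
  · exact ⟨1 / 2, by norm_num, fun g => by simp [Subsingleton.elim g 0, hQ0, hN0]⟩
  obtain ⟨g₀, hg₀, hmax⟩ := (isCompact_sphere (0 : E) 1).exists_isMaxOn
    (NormedSpace.sphere_nonempty.2 zero_le_one) (hQ.continuousOn.div hN.continuousOn
      fun g hg => (hN_pos g (ne_zero_of_mem_unit_sphere ⟨g, hg⟩)).ne')
  have hg₀ne : g₀ ≠ 0 := ne_zero_of_mem_unit_sphere ⟨g₀, hg₀⟩
  set M := Q g₀ / N g₀
  have hM : M < 1 := (div_lt_one (hN_pos g₀ hg₀ne)).2 (hlt g₀ hg₀ne)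
  refine ⟨max M (1 / 2), ⟨by positivity, max_lt hM (by norm_num)⟩, fun g => ?_⟩
  rcases eq_or_ne g 0 with rfl | hg
  · simp [hQ0, hN0]
  have hsphere : ‖g‖⁻¹ • g ∈ Metric.sphere (0 : E) 1 := by simp [norm_smul, hg]
  have hratio : Q g / N g ≤ M := by
    have : Q (‖g‖⁻¹ • g) / N (‖g‖⁻¹ • g) ≤ M := hmax hsphere
    rwa [hQ_smul, hN_smul, mul_div_mul_left _ _ (by positivity)] at this
  calc Q g ≤ M * N g := (div_le_iff₀ (hN_pos g hg)).1 hratio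
    _ ≤ max M (1 / 2) * N g := by gcongr; exacts [(hN_pos g hg).le, le_max_left _ _]

theorem exists_pos_forall_pow_eq_two_rpow {r : ℝ} (hr0 : 0 < r) (hr1 : r < 1) :
    ∃ c : ℝ, 0 < c ∧ ∀ n : ℕ, (2 : ℝ) ^ (-(c * n)) = r ^ n :=
  ⟨-Real.logb 2 r, neg_pos.2 (Real.logb_neg one_lt_two hr0 hr1), fun n => by
    rw [neg_mul, neg_neg, Real.rpow_mul zero_le_two, Real.rpow_logb zero_lt_two one_lt_two.ne' hr0,
      Real.rpow_natCast]⟩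

open Matrix
open scoped Kronecker

noncomputable def weightedNormSq {ι 𝕜 : Type*} [Fintype ι] [RCLike 𝕜] (w : ι → ℝ) (g : ι → 𝕜) :
    ℝ :=
  ∑ i, w i * ‖g i‖ ^ 2

theorem norm_sum_mul_sq_le_weightedNormSq_mul {ι 𝕜 : Type*} [Fintype ι] [RCLike 𝕜]
    {w : ι → ℝ} (hw : ∀ i, 0 < w i) (f g : ι → 𝕜) :
    ‖∑ i, f i * g i‖ ^ 2 ≤ weightedNormSq w f * weightedNormSq w⁻¹ g := by
  calc ‖∑ i, f i * g i‖ ^ 2 ≤ (∑ i, ‖f i‖ * ‖g i‖) ^ 2 := by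
        gcongr
        exact (norm_sum_le _ _).trans_eq (by simp only [norm_mul])
    _ ≤ weightedNormSq w f * weightedNormSq w⁻¹ g :=
        sum_sq_le_sum_mul_sum_of_sq_le_mul univ (fun i _ => by have := hw i; positivity)
          (fun i _ => by have := hw i; simp only [Pi.inv_apply]; positivity)
          fun i _ => le_of_eq (by have := (hw i).ne'; simp only [Pi.inv_apply]; field_simp)

theorem weightedNormSq_nonneg {ι 𝕜 : Type*} [Fintype ι] [RCLike 𝕜] {w : ι → ℝ}
    (hw : ∀ i, 0 ≤ w i) {g : ι → 𝕜} : 0 ≤ weightedNormSq w g :=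
  sum_nonneg fun i _ => mul_nonneg (hw i) (sq_nonneg _)

theorem weightedNormSq_le_sum {ι 𝕜 : Type*} [Fintype ι] [RCLike 𝕜] {w : ι → ℝ}
    (hw : ∀ i, 0 ≤ w i) {g : ι → 𝕜} (hg : ∀ i, ‖g i‖ ≤ 1) : weightedNormSq w g ≤ ∑ i, w i :=
  sum_le_sum fun i _ => mul_le_of_le_one_right (hw i) (pow_le_one₀ (norm_nonneg _) (hg i))

theorem weightedNormSq_real_smul {ι 𝕜 : Type*} [Fintype ι] [RCLike 𝕜] (w : ι → ℝ) (c : ℝ)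
    (g : ι → 𝕜) : weightedNormSq w (c • g) = c ^ 2 * weightedNormSq w g := by
  simp only [weightedNormSq, Pi.smul_apply, norm_smul, Real.norm_eq_abs, mul_pow, sq_abs, mul_sum]
  exact sum_congr rfl fun i _ => by ring

theorem continuous_weightedNormSq {ι 𝕜 : Type*} [Fintype ι] [RCLike 𝕜] (w : ι → ℝ) :
    Continuous (weightedNormSq (𝕜 := 𝕜) w) := by
  unfold weightedNormSq
  fun_prop

theorem weightedNormSq_comp_equiv {ι κ 𝕜 : Type*} [Fintype ι] [Fintype κ] [RCLike 𝕜] (e : κ ≃ ι)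
    (w : ι → ℝ) (g : ι → 𝕜) : weightedNormSq (w ∘ e) (g ∘ e) = weightedNormSq w g :=
  e.sum_comp fun i => w i * ‖g i‖ ^ 2

def Matrix.kroneckerPow {X Y R : Type*} [CommMonoid R] (A : Matrix X Y R) (n : ℕ) :
    Matrix (Fin n → X) (Fin n → Y) R :=
  Matrix.of fun x y => ∏ i, A (x i) (y i)

theorem weightedNormSq_kronecker_mulVec_le {X Y X' Y' 𝕜 : Type*} [Fintype X] [Fintype Y]
    [Fintype X'] [Fintype Y'] [RCLike 𝕜] {A : Matrix X Y 𝕜} {B : Matrix X' Y' 𝕜}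
    {v : X → ℝ} {w : Y → ℝ} {v' : X' → ℝ} {w' : Y' → ℝ} {ρ σ : ℝ}
    (hv' : ∀ x', 0 ≤ v' x') (hw : ∀ y, 0 ≤ w y) (hρ : 0 ≤ ρ)
    (hA : ∀ g, weightedNormSq v (A *ᵥ g) ≤ ρ * weightedNormSq w g)
    (hB : ∀ g, weightedNormSq v' (B *ᵥ g) ≤ σ * weightedNormSq w' g) (G : Y × Y' → 𝕜) :
    weightedNormSq (fun p => v p.1 * v' p.2) ((A ⊗ₖ B) *ᵥ G)
      ≤ ρ * σ * weightedNormSq (fun q => w q.1 * w' q.2) G := by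
  set H : X' → Y → 𝕜 := fun x' y => (B *ᵥ fun y' => G (y, y')) x'
  have hmul : ∀ x x', ((A ⊗ₖ B) *ᵥ G) (x, x') = (A *ᵥ H x') x := fun x x' => by
    simp only [H, mulVec, dotProduct, Fintype.sum_prod_type, kroneckerMap_apply, mul_sum]
    exact sum_congr rfl fun y _ => sum_congr rfl fun y' _ => by ring
  calc weightedNormSq (fun p => v p.1 * v' p.2) ((A ⊗ₖ B) *ᵥ G)
      = ∑ x', v' x' * weightedNormSq v (A *ᵥ H x') := by
        simp only [weightedNormSq, Fintype.sum_prod_type, hmul, mul_sum]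
        rw [sum_comm]
        exact sum_congr rfl fun x' _ => sum_congr rfl fun x _ => by ring
    _ ≤ ∑ x', v' x' * (ρ * weightedNormSq w (H x')) := by
        gcongr with x' _
        exacts [hv' x', hA _]
    _ = ρ * ∑ y, w y * weightedNormSq v' (B *ᵥ fun y' => G (y, y')) := by
        simp only [weightedNormSq, H, mul_sum]
        rw [sum_comm]
        exact sum_congr rfl fun y _ => sum_congr rfl fun x' _ => by ring
    _ ≤ ρ * ∑ y, w y * (σ * weightedNormSq w' fun y' => G (y, y')) := by
        gcongr with y _
        exacts [hw y, hB _]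
    _ = ρ * σ * weightedNormSq (fun q => w q.1 * w' q.2) G := by
        simp only [weightedNormSq, Fintype.sum_prod_type, mul_sum]
        exact sum_congr rfl fun y _ => sum_congr rfl fun y' _ => by ring

theorem prod_comp_consEquiv {X R : Type*} [CommMonoid R] {n : ℕ} (f : X → R) :
    (fun x => ∏ i, f (x i)) ∘ Fin.consEquiv (fun _ : Fin (n + 1) => X)
      = fun p => f p.1 * ∏ i, f (p.2 i) := by
  ext p
  simp [Fin.prod_univ_succ, Fin.consEquiv]

theorem Matrix.kroneckerPow_succ_mulVec {X Y R : Type*} [Fintype Y] [CommRing R]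
    (A : Matrix X Y R) (n : ℕ) (G : (Fin (n + 1) → Y) → R) :
    (A.kroneckerPow (n + 1) *ᵥ G) ∘ Fin.consEquiv (fun _ => X)
      = (A ⊗ₖ A.kroneckerPow n) *ᵥ (G ∘ Fin.consEquiv (fun _ => Y)) := by
  ext p
  simp only [Function.comp_apply, mulVec, dotProduct]
  rw [← (Fin.consEquiv fun _ => Y).sum_comp]
  refine sum_congr rfl fun q _ => ?_
  simp [kroneckerPow, Fin.prod_univ_succ, Fin.consEquiv]

theorem weightedNormSq_kroneckerPow_mulVec_le {X Y 𝕜 : Type*} [Fintype X] [Fintype Y] [RCLike 𝕜]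
    {A : Matrix X Y 𝕜} {v : X → ℝ} {w : Y → ℝ}
    {ρ : ℝ} (hv : ∀ x, 0 ≤ v x) (hw : ∀ y, 0 ≤ w y) (hρ : 0 ≤ ρ)
    (hA : ∀ g, weightedNormSq v (A *ᵥ g) ≤ ρ * weightedNormSq w g) (n : ℕ)
    (G : (Fin n → Y) → 𝕜) :
    weightedNormSq (fun x => ∏ i, v (x i)) (A.kroneckerPow n *ᵥ G)
      ≤ ρ ^ n * weightedNormSq (fun y => ∏ i, w (y i)) G := by
  induction n with
  | zero => simp [weightedNormSq, kroneckerPow, mulVec, dotProduct]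
  | succ n ih =>
    rw [← weightedNormSq_comp_equiv (Fin.consEquiv fun _ => X), kroneckerPow_succ_mulVec,
      prod_comp_consEquiv, ← weightedNormSq_comp_equiv (Fin.consEquiv fun _ => Y) _ G,
      prod_comp_consEquiv, pow_succ']
    exact weightedNormSq_kronecker_mulVec_le (fun x => prod_nonneg fun i _ => hv (x i)) hw hρ hA
      ih _

theorem norm_sum_mul_kroneckerPow_mulVec_sq_le {X Y 𝕜 : Type*} [Fintype X] [Fintype Y]
    [RCLike 𝕜] {A : Matrix X Y 𝕜} {v : X → ℝ} {w : Y → ℝ} {ρ : ℝ} (hv : ∀ x, 0 < v x)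
    (hw : ∀ y, 0 ≤ w y) (hρ : 0 ≤ ρ) (hv_sum : ∑ x, v x = 1) (hw_sum : ∑ y, w y = 1)
    (hA : ∀ g, weightedNormSq v⁻¹ (A *ᵥ g) ≤ ρ * weightedNormSq w g) (n : ℕ)
    {F : (Fin n → X) → 𝕜} {G : (Fin n → Y) → 𝕜} (hF : ∀ x, ‖F x‖ ≤ 1) (hG : ∀ y, ‖G y‖ ≤ 1) :
    ‖∑ x, F x * (A.kroneckerPow n *ᵥ G) x‖ ^ 2 ≤ ρ ^ n := by
  set P : (Fin n → X) → ℝ := fun x => ∏ i, v (x i)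
  have hP : ∀ x, 0 < P x := fun x => prod_pos fun i _ => hv (x i)
  have hF' : weightedNormSq P F ≤ 1 := (weightedNormSq_le_sum (fun x => (hP x).le) hF).trans_eq
    (by rw [← Fintype.sum_pow, hv_sum, one_pow])
  have hG' : weightedNormSq (fun y => ∏ i, w (y i)) G ≤ 1 :=
    (weightedNormSq_le_sum (fun y => prod_nonneg fun i _ => hw (y i)) hG).trans_eq
      (by rw [← Fintype.sum_pow, hw_sum, one_pow])
  have hS : weightedNormSq P⁻¹ (A.kroneckerPow n *ᵥ G) ≤ ρ ^ n := by
    rw [show P⁻¹ = fun x => ∏ i, v⁻¹ (x i) by ext; simp [P, prod_inv_distrib]]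
    exact (weightedNormSq_kroneckerPow_mulVec_le (fun x => (inv_pos.2 (hv x)).le) hw hρ hA n
      G).trans (mul_le_of_le_one_right (pow_nonneg hρ n) hG')
  calc _ ≤ weightedNormSq P F * weightedNormSq P⁻¹ (A.kroneckerPow n *ᵥ G) :=
        norm_sum_mul_sq_le_weightedNormSq_mul hP _ _
    _ ≤ 1 * ρ ^ n :=
        mul_le_mul hF' hS (weightedNormSq_nonneg fun x => (inv_pos.2 (hP x)).le) zero_le_one
    _ = ρ ^ n := one_mul _

theorem BipartiteConnected.eq_of_forall_adj {X Y α : Type*} {adj : X → Y → Prop}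
    (h : BipartiteConnected adj) {φ : X ⊕ Y → α}
    (hφ : ∀ x y, adj x y → φ (.inl x) = φ (.inr y)) (p q : X ⊕ Y) : φ p = φ q := by
  obtain ⟨w⟩ := h.preconnected p q
  induction w with
  | nil => rfl
  | cons hadj _ ih =>
    rw [← ih]
    obtain ⟨-, ⟨x, y, rfl, rfl, hxy⟩ | ⟨x, y, rfl, rfl, hxy⟩⟩ :=
      SimpleGraph.fromRel_adj _ _ _ |>.1 hadj
    · exact hφ x y hxy
    · exact (hφ x y hxy).symm

theorem BipartiteConnected.exists_adj_left {X Y : Type*} [Nonempty Y] {adj : X → Y → Prop}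
    (h : BipartiteConnected adj) (x : X) : ∃ y, adj x y := by
  obtain ⟨w⟩ := h.preconnected (.inl x) (.inr (Classical.arbitrary Y))
  have hadj := w.adj_snd (w.not_nil_of_ne Sum.inl_ne_inr)
  obtain ⟨-, ⟨x', y, hx, -, hxy⟩ | ⟨x', y, -, hx, -⟩⟩ := SimpleGraph.fromRel_adj _ _ _ |>.1 hadj
  · exact ⟨y, Sum.inl_injective hx ▸ hxy⟩
  · exact absurd hx Sum.inl_ne_inr

theorem exists_perfect_xor_strategy_of_phase {X Y K : Type*} [Field K] {adj : X → Y → Prop}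
    (hconn : BipartiteConnected adj) {m : ℕ} [NeZero m] {ω : K} (hω : IsPrimitiveRoot ω m)
    {t : X × Y → ZMod m} {φ : X ⊕ Y → K}
    (hφ : ∀ x y, adj x y → φ (.inl x) = ω ^ (-t (x, y)).val * φ (.inr y))
    {p₀ : X ⊕ Y} (hp₀ : φ p₀ ≠ 0) :
    ∃ (f : X → ZMod m) (g : Y → ZMod m), ∀ x y, adj x y → f x + g y = t (x, y) := by
  set ψ : X ⊕ Y → K := fun p => φ p / φ p₀
  have hψ : ∀ x y, adj x y → ψ (.inl x) = ω ^ (-t (x, y)).val * ψ (.inr y) := fun x y hxy => by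
    simp only [ψ, hφ x y hxy, mul_div_assoc]
  have hψ_pow : ∀ p, ψ p ^ m = 1 := by
    have hconst := hconn.eq_of_forall_adj (φ := fun p => ψ p ^ m) fun x y hxy => by
      rw [hψ x y hxy, mul_pow, pow_right_comm, hω.pow_eq_one, one_pow, one_mul]
    exact fun p => (hconst p p₀).trans (by simp [ψ, div_self hp₀])
  choose k _ hk using fun p => hω.eq_pow_of_pow_eq_one (hψ_pow p)
  refine ⟨fun x => -(k (.inl x) : ZMod m), fun y => k (.inr y), fun x y hxy => ?_⟩
  have hpow : ω ^ k (.inl x) = ω ^ ((-t (x, y)).val + k (.inr y)) := by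
    rw [pow_add, hk, hk, hψ x y hxy]
  rw [(hω.isOfFinOrder (NeZero.ne m)).pow_eq_pow_iff_modEq, ← hω.eq_orderOf,
    ← ZMod.natCast_eq_natCast_iff] at hpow
  push_cast [ZMod.natCast_val, ZMod.cast_id] at hpow
  linear_combination -hpow

section XorGame

variable {X Y : Type*}

noncomputable def xorMatrix (μ : X × Y → ℝ) (m : ℕ) (t : X × Y → ZMod m) : Matrix X Y ℂ :=
  Matrix.of fun x y => μ (x, y) * rootOfUnity' m ^ (-t (x, y)).val

def fstMarginal [Fintype Y] (μ : X × Y → ℝ) (x : X) : ℝ := ∑ y, μ (x, y)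

def sndMarginal [Fintype X] (μ : X × Y → ℝ) (y : Y) : ℝ := ∑ x, μ (x, y)

theorem fstMarginal_nonneg [Fintype Y] {μ : X × Y → ℝ} (hμ : ∀ p, 0 ≤ μ p) (x : X) :
    0 ≤ fstMarginal μ x :=
  sum_nonneg fun y _ => hμ (x, y)

theorem sndMarginal_nonneg [Fintype X] {μ : X × Y → ℝ} (hμ : ∀ p, 0 ≤ μ p) (y : Y) :
    0 ≤ sndMarginal μ y :=
  sum_nonneg fun x _ => hμ (x, y)

theorem fstMarginal_pos [Fintype Y] {μ : X × Y → ℝ} (hμ : ∀ p, 0 ≤ μ p) {x : X} {y : Y}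
    (hxy : 0 < μ (x, y)) : 0 < fstMarginal μ x :=
  hxy.trans_le (single_le_sum (fun y _ => hμ (x, y)) (mem_univ y))

theorem sum_fstMarginal [Fintype X] [Fintype Y] (μ : X × Y → ℝ) :
    ∑ x, fstMarginal μ x = ∑ p, μ p :=
  (Fintype.sum_prod_type' _).symm

theorem sum_sndMarginal [Fintype X] [Fintype Y] (μ : X × Y → ℝ) :
    ∑ y, sndMarginal μ y = ∑ p, μ p :=
  (Fintype.sum_prod_type_right' _).symm

theorem norm_rootOfUnity' (m : ℕ) : ‖rootOfUnity' m‖ = 1 := by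
  rw [rootOfUnity', show 2 * Real.pi * Complex.I / m = ((2 * Real.pi / m : ℝ) : ℂ) * Complex.I by
    push_cast; ring, Complex.norm_exp_ofReal_mul_I]

theorem xorMatrix_mulVec_apply [Fintype Y] (μ : X × Y → ℝ) (m : ℕ) (t : X × Y → ZMod m)
    (g : Y → ℂ) (x : X) :
    (xorMatrix μ m t *ᵥ g) x = ∑ y, μ (x, y) • (rootOfUnity' m ^ (-t (x, y)).val * g y) := by
  simp only [xorMatrix, mulVec, dotProduct, Matrix.of_apply, Complex.real_smul, mul_assoc]

theorem norm_xorMatrix_mulVec_sq_le [Fintype Y] {μ : X × Y → ℝ} (hμ : ∀ p, 0 ≤ μ p) {m : ℕ}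
    (t : X × Y → ZMod m) (g : Y → ℂ) (x : X) :
    ‖(xorMatrix μ m t *ᵥ g) x‖ ^ 2 ≤ fstMarginal μ x * ∑ y, μ (x, y) * ‖g y‖ ^ 2 := by
  simpa [xorMatrix_mulVec_apply, norm_rootOfUnity', fstMarginal] using
    norm_sum_smul_sq_le (s := univ) (fun y _ => hμ (x, y))
      fun y => rootOfUnity' m ^ (-t (x, y)).val * g y

theorem inv_fstMarginal_mul_norm_xorMatrix_mulVec_sq_le [Fintype Y] {μ : X × Y → ℝ}
    (hμ : ∀ p, 0 ≤ μ p) {m : ℕ} (t : X × Y → ZMod m) (g : Y → ℂ) (x : X) :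
    (fstMarginal μ x)⁻¹ * ‖(xorMatrix μ m t *ᵥ g) x‖ ^ 2 ≤ ∑ y, μ (x, y) * ‖g y‖ ^ 2 := by
  rcases (fstMarginal_nonneg hμ x).eq_or_lt with h | h
  · rw [← h, _root_.inv_zero, zero_mul]
    exact sum_nonneg fun y _ => mul_nonneg (hμ (x, y)) (sq_nonneg _)
  · rw [inv_mul_le_iff₀ h]
    exact norm_xorMatrix_mulVec_sq_le hμ t g x

theorem weightedNormSq_sndMarginal [Fintype X] [Fintype Y] (μ : X × Y → ℝ) (g : Y → ℂ) :
    weightedNormSq (sndMarginal μ) g = ∑ x, ∑ y, μ (x, y) * ‖g y‖ ^ 2 := by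
  simp only [weightedNormSq, sndMarginal, sum_mul]
  exact sum_comm

theorem weightedNormSq_xorMatrix_mulVec_le [Fintype X] [Fintype Y] {μ : X × Y → ℝ}
    (hμ : ∀ p, 0 ≤ μ p) {m : ℕ} (t : X × Y → ZMod m) (g : Y → ℂ) :
    weightedNormSq (fstMarginal μ)⁻¹ (xorMatrix μ m t *ᵥ g) ≤ weightedNormSq (sndMarginal μ) g := by
  rw [weightedNormSq_sndMarginal]
  exact sum_le_sum fun x _ => inv_fstMarginal_mul_norm_xorMatrix_mulVec_sq_le hμ t g x

theorem weightedNormSq_xorMatrix_mulVec_lt [Fintype X] [Fintype Y] {μ : X × Y → ℝ}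
    (hμ : ∀ p, 0 ≤ μ p) {m : ℕ} [NeZero m] {t : X × Y → ZMod m}
    (hconn : BipartiteConnected fun x y => 0 < μ (x, y))
    (hval : ¬ ∃ (f : X → ZMod m) (g : Y → ZMod m), ∀ x y, 0 < μ (x, y) → f x + g y = t (x, y))
    {g : Y → ℂ} (hg : g ≠ 0) :
    weightedNormSq (fstMarginal μ)⁻¹ (xorMatrix μ m t *ᵥ g) < weightedNormSq (sndMarginal μ) g := by
  refine (weightedNormSq_xorMatrix_mulVec_le hμ t g).lt_of_ne fun heq => hval ?_
  rw [weightedNormSq_sndMarginal] at heq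
  have hrow : ∀ x, (fstMarginal μ x)⁻¹ * ‖(xorMatrix μ m t *ᵥ g) x‖ ^ 2
      = ∑ y, μ (x, y) * ‖g y‖ ^ 2 := fun x =>
    (sum_eq_sum_iff_of_le fun x _ => inv_fstMarginal_mul_norm_xorMatrix_mulVec_sq_le hμ t g x).1
      heq x (mem_univ x)
  have hphase : ∀ x y, 0 < μ (x, y) → (fstMarginal μ x : ℂ)⁻¹ * (xorMatrix μ m t *ᵥ g) x
      = rootOfUnity' m ^ (-t (x, y)).val * g y := by
    intro x y hxy
    have hpos := fstMarginal_pos hμ hxy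
    have hsq : ‖∑ y, μ (x, y) • (rootOfUnity' m ^ (-t (x, y)).val * g y)‖ ^ 2
        = (∑ y, μ (x, y)) * ∑ y, μ (x, y) * ‖rootOfUnity' m ^ (-t (x, y)).val * g y‖ ^ 2 := by
      simp only [← xorMatrix_mulVec_apply, norm_mul, norm_pow, norm_rootOfUnity', one_pow, one_mul]
      rw [← hrow x, ← fstMarginal, mul_inv_cancel_left₀ hpos.ne']
    have havg := sum_smul_eq_of_norm_sum_smul_sq_eq (fun y _ => hμ (x, y)) hsq (mem_univ y) hxy
    rw [← xorMatrix_mulVec_apply, ← fstMarginal, Complex.real_smul] at havg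
    rw [havg, inv_mul_cancel_left₀ (Complex.ofReal_ne_zero.2 hpos.ne')]
  obtain ⟨y₀, hy₀⟩ := Function.ne_iff.1 hg
  exact exists_perfect_xor_strategy_of_phase hconn (Complex.isPrimitiveRoot_exp m (NeZero.ne m))
    (φ := Sum.elim (fun x => (fstMarginal μ x : ℂ)⁻¹ * (xorMatrix μ m t *ᵥ g) x) g)
    hphase (p₀ := .inr y₀) hy₀

theorem exists_xorMatrix_contraction [Fintype X] [Fintype Y] {μ : X × Y → ℝ}
    (hμ : ∀ p, 0 ≤ μ p) {m : ℕ} [NeZero m] {t : X × Y → ZMod m}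
    (hconn : BipartiteConnected fun x y => 0 < μ (x, y))
    (hval : ¬ ∃ (f : X → ZMod m) (g : Y → ZMod m), ∀ x y, 0 < μ (x, y) → f x + g y = t (x, y)) :
    ∃ ρ ∈ Set.Ioo (0 : ℝ) 1, ∀ g, weightedNormSq (fstMarginal μ)⁻¹ (xorMatrix μ m t *ᵥ g)
      ≤ ρ * weightedNormSq (sndMarginal μ) g :=
  exists_lt_one_forall_le_mul_of_lt
    ((continuous_weightedNormSq _).comp (Continuous.matrix_mulVec continuous_const continuous_id))
    (continuous_weightedNormSq _)
    (fun c g => by rw [mulVec_smul, weightedNormSq_real_smul])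
    (fun c g => weightedNormSq_real_smul _ c g)
    (fun g => weightedNormSq_nonneg fun x => inv_nonneg.2 (fstMarginal_nonneg hμ x))
    fun g hg => weightedNormSq_xorMatrix_mulVec_lt hμ hconn hval hg

theorem sum_xor_eq_sum_mul_kroneckerPow_mulVec [Fintype X] [Fintype Y] (μ : X × Y → ℝ) (m : ℕ)
    (t : X × Y → ZMod m) (n : ℕ) (F : (Fin n → X) → ℂ) (G : (Fin n → Y) → ℂ) :
    ∑ x : Fin n → X, ∑ y : Fin n → Y, ((∏ i, μ (x i, y i) : ℝ) : ℂ) * F x * G y *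
        ∏ i, rootOfUnity' m ^ (-t (x i, y i)).val
      = ∑ x, F x * ((xorMatrix μ m t).kroneckerPow n *ᵥ G) x := by
  refine sum_congr rfl fun x _ => ?_
  simp only [mulVec, dotProduct, mul_sum, kroneckerPow, xorMatrix, Matrix.of_apply,
    prod_mul_distrib, Complex.ofReal_prod]
  exact sum_congr rfl fun y _ => by ring

end XorGame

theorem two_player_xor_decay_general
    {Xt Yt : Type*} [Fintype Xt] [Fintype Yt] [Nonempty Yt]
    (μ : Xt × Yt → ℝ) (hμ0 : ∀ p, 0 ≤ μ p) (hμ1 : ∑ p, μ p = 1)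
    (m : ℕ) (hm : 2 ≤ m) (t : Xt × Yt → ZMod m)
    (hconn : BipartiteConnected (fun x y => 0 < μ (x, y)))
    (hval : ¬ ∃ (f : Xt → ZMod m) (g : Yt → ZMod m),
      ∀ x y, 0 < μ (x, y) → f x + g y = t (x, y)) :
    ∃ c : ℝ, 0 < c ∧ ∀ n : ℕ, 1 ≤ n →
      ∀ (F : (Fin n → Xt) → ℂ) (G : (Fin n → Yt) → ℂ),
        (∀ x, ‖F x‖ ≤ 1) → (∀ y, ‖G y‖ ≤ 1) →
        ‖∑ x : Fin n → Xt, ∑ y : Fin n → Yt,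
          ((∏ i, μ (x i, y i) : ℝ) : ℂ) * F x * G y *
            ∏ i, rootOfUnity' m ^ (- t (x i, y i)).val‖
        ≤ (2 : ℝ) ^ (-(c * n)) := by
  have : NeZero m := ⟨by omega⟩
  obtain ⟨ρ, ⟨hρ0, hρ1⟩, hρ⟩ := exists_xorMatrix_contraction hμ0 hconn hval
  obtain ⟨c, hc, hc_pow⟩ := exists_pos_forall_pow_eq_two_rpow (Real.sqrt_pos.2 hρ0)
    (Real.sqrt_one ▸ Real.sqrt_lt_sqrt hρ0.le hρ1)
  refine ⟨c, hc, fun n _ F G hF hG => ?_⟩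
  have hμX : ∀ x, 0 < fstMarginal μ x := fun x =>
    have ⟨_, hxy⟩ := hconn.exists_adj_left x
    fstMarginal_pos hμ0 hxy
  rw [sum_xor_eq_sum_mul_kroneckerPow_mulVec, hc_pow,
    ← pow_le_pow_iff_left₀ (norm_nonneg _) (by positivity) two_ne_zero, ← pow_mul, mul_comm,
    pow_mul, Real.sq_sqrt hρ0.le]
  exact norm_sum_mul_kroneckerPow_mulVec_sq_le hμX (sndMarginal_nonneg hμ0) hρ0.le
    (by rw [sum_fstMarginal, hμ1]) (by rw [sum_sndMarginal, hμ1]) hρ n hF hG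

/-- Exponential decay for connected two-player XOR games of value `< 1`. -/
theorem two_player_xor_decay
    {Xt Yt : Type*} [Fintype Xt] [Fintype Yt] [Nonempty Xt] [Nonempty Yt]
    (μ : Xt × Yt → ℝ) (hμ0 : ∀ p, 0 ≤ μ p) (hμ1 : ∑ p, μ p = 1)
    (m : ℕ) (hm : 2 ≤ m) (t : Xt × Yt → ZMod m)
    (hconn : BipartiteConnected (fun x y => 0 < μ (x, y)))
    (hval : ¬ ∃ (f : Xt → ZMod m) (g : Yt → ZMod m),
      ∀ x y, 0 < μ (x, y) → f x + g y = t (x, y)) :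
    ∃ c : ℝ, 0 < c ∧ ∀ n : ℕ, 1 ≤ n →
      ∀ (F : (Fin n → Xt) → ℂ) (G : (Fin n → Yt) → ℂ),
        (∀ x, ‖F x‖ ≤ 1) → (∀ y, ‖G y‖ ≤ 1) →
        ‖∑ x : Fin n → Xt, ∑ y : Fin n → Yt,
          ((∏ i, μ (x i, y i) : ℝ) : ℂ) * F x * G y *
            ∏ i, rootOfUnity' m ^ (- t (x i, y i)).val‖
        ≤ (2 : ℝ) ^ (-(c * n)) :=
  two_player_xor_decay_general μ hμ0 hμ1 m hm t hconn hval
end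

section
/- There is an absolute constant C > 0 with the following property: for every integer d ≥ 0 and every ε ∈ (0,1/2), there exist real numbers ρ_0, …, ρ_d ∈ [0, 1−ε] and c_0, …, c_d ∈ ℝ such that (1) Σ_{j=0}^d c_j·ρ_j^k = 1 for every integer k with 0 ≤ k ≤ d; (2) 0 ≤ Σ_{j=0}^d c_j·ρ_j^k ≤ 1 for every integer k ≥ d+1; and (3) Σ_{j=0}^d |c_j| ≤ 2^{C·d·√ε}. -/
open Finset Polynomial Real

/-!
Let `c_j = ℓ_j(1)` be the Lagrange weights at the Chebyshev extrema moved onto `[0, 1 - ε]`,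
`ρ_j = (1 - ε)(1 + cos (jπ/d))/2`, so that `∑ c_j p(ρ_j) = p(1)` whenever `deg p ≤ d`; this
gives (1). For `k > d` the sum `∑ c_j ρ_j^k` is `N(1)` for the interpolant `N` of `X^k`, whose
Newton coefficients (divided differences of `X^k` at nonnegative nodes) are nonnegative, and so
is the remainder `X^k - N` at `1`; hence `0 ≤ N(1) ≤ 1`. The nodes decrease and lie below `1`,
so `c_j` has sign `(-1)^j`, and `∑ |c_j| = p(1)` for the rescaled Chebyshev polynomial
`p(x) = T_d(2x/(1 - ε) - 1)`, which equals `(-1)^j` at `ρ_j`. Finally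
`p(1) = T_d((1 + ε)/(1 - ε)) = cosh (d log ((1 + √ε)/(1 - √ε))) ≤ exp (7 d √ε) ≤ 2^(11 d √ε)`.
-/

namespace Polynomial

variable {R : Type*} [CommRing R] [PartialOrder R] [IsOrderedRing R]

theorem eval_nonneg_of_coeff_nonneg {p : R[X]} (hp : ∀ k, 0 ≤ p.coeff k) {a : R} (ha : 0 ≤ a) :
    0 ≤ p.eval a := by
  rw [eval_eq_sum_range]
  exact sum_nonneg fun i _ => mul_nonneg (hp i) (pow_nonneg ha i)

theorem coeff_divByMonic_X_sub_C_nonneg {p : R[X]} (hp : ∀ k, 0 ≤ p.coeff k) {a : R} (ha : 0 ≤ a)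
    (k : ℕ) : 0 ≤ (p /ₘ (X - C a)).coeff k := by
  rw [coeff_divByMonic_X_sub_C]
  exact sum_nonneg fun i _ => mul_nonneg (pow_nonneg ha _) (hp i)

theorem exists_interpolant_nonneg_le_of_coeff_nonneg {t : R} (ht : 0 ≤ t) {n : ℕ}
    {x : Fin n → R} (hx : ∀ i, 0 ≤ x i ∧ x i ≤ t) {p : R[X]} (hp : ∀ k, 0 ≤ p.coeff k) :
    ∃ N : R[X], N.degree < n ∧ (∀ i, N.eval (x i) = p.eval (x i)) ∧
      0 ≤ N.eval t ∧ N.eval t ≤ p.eval t := by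
  induction n generalizing p with
  | zero =>
    exact ⟨0, by simp, finZeroElim, by simp, by simpa using eval_nonneg_of_coeff_nonneg hp ht⟩
  | succ n ih =>
    set q := p /ₘ (X - C (x 0))
    have hpq (y : R) : p.eval y = (y - x 0) * q.eval y + p.eval (x 0) := by
      conv_lhs => rw [← modByMonic_add_div p (X - C (x 0))]
      simp [modByMonic_X_sub_C_eq_C_eval, q, add_comm]
    obtain ⟨M, hMdeg, hMx, hM0, hMq⟩ :=
      ih (x := Fin.tail x) (fun i => hx _) (coeff_divByMonic_X_sub_C_nonneg hp (hx 0).1)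
    refine ⟨(X - C (x 0)) * M + C (p.eval (x 0)), ?_, fun i => ?_, ?_, ?_⟩
    · rw [degree_lt_iff_coeff_zero] at hMdeg ⊢
      intro m hm
      obtain ⟨m, rfl⟩ : ∃ m', m = m' + 1 := ⟨m - 1, by omega⟩
      simp [mul_comm (X - C _), coeff_mul_X_sub_C, hMdeg m (by omega),
        hMdeg (m + 1) (by omega)]
    · refine Fin.cases (by simp) (fun i => ?_) i
      have := hMx i
      simp only [Fin.tail] at this
      simp [hpq (x i.succ), this, q]
    · simpa using add_nonneg (mul_nonneg (sub_nonneg.2 (hx 0).2) hM0)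
        (eval_nonneg_of_coeff_nonneg hp (hx 0).1)
    · rw [hpq t]
      simpa using mul_le_mul_of_nonneg_left hMq (sub_nonneg.2 (hx 0).2)

end Polynomial

namespace Lagrange

theorem sum_eval_basis_mul_eval {F ι : Type*} [Field F] [DecidableEq ι] {s : Finset ι}
    {v : ι → F} (hvs : Set.InjOn v s) {p : F[X]} (hp : p.degree < #s) (t : F) :
    ∑ i ∈ s, (Lagrange.basis s v i).eval t * p.eval (v i) = p.eval t := by
  conv_rhs => rw [eq_interpolate hvs hp]
  simp [interpolate_apply, eval_finsetSum, mul_comm]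

variable {F : Type*} [Field F] [LinearOrder F] [IsStrictOrderedRing F] {n : ℕ} {v : Fin n → F}
  {t : F}

theorem sum_eval_basis_mul_eval_nonneg_and_le (hv : Function.Injective v) (ht : 0 ≤ t)
    (hvt : ∀ i, 0 ≤ v i ∧ v i ≤ t) {p : F[X]} (hp : ∀ k, 0 ≤ p.coeff k) :
    0 ≤ ∑ i, (Lagrange.basis univ v i).eval t * p.eval (v i) ∧
      ∑ i, (Lagrange.basis univ v i).eval t * p.eval (v i) ≤ p.eval t := by
  obtain ⟨N, hdeg, hNv, hN0, hNp⟩ := exists_interpolant_nonneg_le_of_coeff_nonneg ht hvt hp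
  have hsum : ∑ i, (Lagrange.basis univ v i).eval t * p.eval (v i) = N.eval t := by
    simp_rw [← hNv]
    exact sum_eval_basis_mul_eval hv.injOn (by simpa using hdeg) t
  exact hsum ▸ ⟨hN0, hNp⟩

theorem zero_le_neg_one_pow_mul_eval_basis (hv : StrictAnti v) (ht : ∀ i, v i ≤ t) (j : Fin n) :
    0 ≤ (-1) ^ (j : ℕ) * (Lagrange.basis univ v j).eval t := by
  set f : Fin n → F := fun i => (v j - v i)⁻¹ * (t - v i)
  have heval : (Lagrange.basis univ v j).eval t = ∏ i ∈ univ.erase j, f i := by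
    simp [Lagrange.basis, eval_prod, basisDivisor, f]
  have hsplit : univ.erase j = Iio j ∪ Ioi j := by
    ext i
    simp only [mem_erase, mem_univ, and_true, mem_union, mem_Iio, mem_Ioi]
    exact ne_iff_lt_or_gt
  have hdisj : Disjoint (Iio j) (Ioi j) := disjoint_left.2 fun i h₁ h₂ =>
    (mem_Iio.1 h₁).not_gt (mem_Ioi.1 h₂)
  have hlow : (-1) ^ (j : ℕ) * ∏ i ∈ Iio j, f i = ∏ i ∈ Iio j, (v i - v j)⁻¹ * (t - v i) := by
    rw [← Fin.card_Iio j, ← prod_neg]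
    exact prod_congr rfl fun i _ => by simp only [f, ← neg_mul, ← inv_neg, neg_sub]
  rw [heval, hsplit, prod_union hdisj, ← mul_assoc, hlow]
  refine mul_nonneg (prod_nonneg fun i hi => ?_) (prod_nonneg fun i hi => ?_)
  · exact mul_nonneg (inv_nonneg.2 (sub_nonneg.2 (hv (mem_Iio.1 hi)).le)) (sub_nonneg.2 (ht i))
  · exact mul_nonneg (inv_nonneg.2 (sub_nonneg.2 (hv (mem_Ioi.1 hi)).le)) (sub_nonneg.2 (ht i))

theorem sum_abs_eval_basis (hv : StrictAnti v) (ht : ∀ i, v i ≤ t) {p : F[X]} (hp : p.degree < n)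
    (hpv : ∀ i, p.eval (v i) = (-1) ^ (i : ℕ)) :
    ∑ i, |(Lagrange.basis univ v i).eval t| = p.eval t := by
  rw [← sum_eval_basis_mul_eval (s := univ) hv.injective.injOn (by simpa using hp) t]
  refine sum_congr rfl fun i _ => ?_
  rw [hpv, mul_comm, ← abs_of_nonneg (zero_le_neg_one_pow_mul_eval_basis hv ht i), abs_mul,
    abs_pow, abs_neg, abs_one, one_pow, one_mul]

end Lagrange

theorem Real.log_one_add_div_one_sub_le {s : ℝ} (hs₀ : 0 ≤ s) (hs : s ≤ 5 / 7) :
    log ((1 + s) / (1 - s)) ≤ 7 * s := by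
  have h₁ : 0 < 1 - s := by linarith
  calc log ((1 + s) / (1 - s)) ≤ (1 + s) / (1 - s) - 1 := log_le_sub_one_of_pos (by positivity)
    _ = 2 * s / (1 - s) := by field_simp; ring
    _ ≤ 7 * s := by rw [div_le_iff₀ h₁]; nlinarith

namespace Polynomial.Chebyshev

theorem degree_T_comp_lt (d : ℕ) (a : ℝ) :
    ((T ℝ d).comp (Polynomial.C a * X - 1)).degree < ↑(d + 1) := by
  have h : ((T ℝ d).comp (Polynomial.C a * X - 1)).natDegree ≤ d := by
    refine natDegree_comp_le.trans ?_
    rw [natDegree_T, Int.natAbs_natCast]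
    exact (Nat.mul_le_mul_left d (by compute_degree)).trans_eq d.mul_one
  exact (degree_le_of_natDegree_le h).trans_lt (WithBot.coe_lt_coe.2 d.lt_succ_self)

theorem eval_T_comp_node {r : ℝ} (hr : r ≠ 0) {d i : ℕ} (hi : i ≤ d) :
    ((T ℝ d).comp (Polynomial.C (2 / r) * X - 1)).eval (r * (1 + node d i) / 2) = (-1) ^ i := by
  have : 2 / r * (r * (1 + node d i) / 2) - 1 = node d i := by field_simp; ring
  simp only [eval_comp, eval_sub, eval_mul, eval_C, eval_X, eval_one]
  rw [this, eval_T_real_node (mem_Iic.2 hi)]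

theorem eval_T_le_two_rpow {ε : ℝ} (hε : 0 < ε) (hε₂ : ε < 1 / 2) (d : ℕ) :
    (T ℝ d).eval ((1 + ε) / (1 - ε)) ≤ 2 ^ (11 * d * √ε) := by
  set s := √ε
  have hs₀ : 0 ≤ s := sqrt_nonneg ε
  have hs₂ : s ^ 2 = ε := sq_sqrt hε.le
  have hs : s ≤ 5 / 7 := by nlinarith
  set z := (1 + s) / (1 - s)
  have hz : 1 ≤ z := by rw [le_div_iff₀ (by linarith)]; linarith
  have hcosh : (1 + ε) / (1 - ε) = cosh (log z) := by
    rw [cosh_log (by linarith), ← hs₂]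
    have : 1 - s ≠ 0 := by linarith
    have : 1 - s ^ 2 ≠ 0 := by nlinarith
    simp only [z]
    field_simp
    ring
  have hlog : 0 ≤ d * log z := mul_nonneg d.cast_nonneg (log_nonneg hz)
  rw [hcosh, T_real_cosh, Int.cast_natCast, rpow_def_of_pos two_pos]
  calc cosh (d * log z) ≤ exp (d * log z) := by
        rw [cosh_eq]
        linarith [exp_le_one_iff.2 (neg_nonpos.2 hlog), one_le_exp hlog]
    _ ≤ exp (log 2 * (11 * d * s)) := by
        refine exp_le_exp.2 ?_
        calc d * log z ≤ d * (7 * s) := by gcongr; exact log_one_add_div_one_sub_le hs₀ hs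
          _ ≤ log 2 * (11 * d * s) := by
            nlinarith [log_two_gt_d9, mul_nonneg d.cast_nonneg hs₀]

end Polynomial.Chebyshev

open Polynomial.Chebyshev in
/-- Polynomial approximation via Chebyshev polynomials: existence of nodes
`ρ_j ∈ [0, 1-ε]` and coefficients `c_j` such that `Σ c_j ρ_j^k = 1` for `k ≤ d`,
`Σ c_j ρ_j^k ∈ [0,1]` for `k > d`, and `Σ |c_j| ≤ 2^{O(d√ε)}`. -/
theorem polynomial_approximation :
    ∃ C : ℝ, 0 < C ∧ ∀ (d : ℕ) (ε : ℝ), 0 < ε → ε < 1 / 2 →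
      ∃ (ρ c : Fin (d + 1) → ℝ),
        (∀ j, 0 ≤ ρ j ∧ ρ j ≤ 1 - ε) ∧
        (∀ k : ℕ, k ≤ d → ∑ j, c j * ρ j ^ k = 1) ∧
        (∀ k : ℕ, d + 1 ≤ k → 0 ≤ ∑ j, c j * ρ j ^ k ∧ ∑ j, c j * ρ j ^ k ≤ 1) ∧
        (∑ j, |c j| ≤ (2 : ℝ) ^ (C * d * Real.sqrt ε)) := by
  refine ⟨11, by norm_num, fun d ε hε hε₂ => ?_⟩
  have hr : 0 < 1 - ε := by linarith
  set ρ : Fin (d + 1) → ℝ := fun j => (1 - ε) * (1 + node d j) / 2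
  have hρ : ∀ j, 0 ≤ ρ j ∧ ρ j ≤ 1 - ε := fun j => by
    obtain ⟨h₁, h₂⟩ := node_mem_Icc (n := d) (i := j)
    simp only [ρ]
    constructor <;> nlinarith
  have hρ₁ : ∀ j, 0 ≤ ρ j ∧ ρ j ≤ 1 := fun j => ⟨(hρ j).1, (hρ j).2.trans (by linarith)⟩
  have hanti : StrictAnti ρ := fun i j hij => by
    have := node_lt j.is_le hij
    simp only [ρ]
    gcongr
  refine ⟨ρ, fun j => (Lagrange.basis univ ρ j).eval 1, hρ, fun k hk => ?_, fun k _ => ?_, ?_⟩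
  · have := Lagrange.sum_eval_basis_mul_eval (s := univ) hanti.injective.injOn (p := X ^ k)
      (by rw [degree_X_pow, card_univ, Fintype.card_fin]; exact_mod_cast Nat.lt_succ_of_le hk) 1
    simpa using this
  · simpa using Lagrange.sum_eval_basis_mul_eval_nonneg_and_le hanti.injective zero_le_one hρ₁
      (p := X ^ k) fun n => by rw [coeff_X_pow]; split_ifs <;> norm_num
  · rw [Lagrange.sum_abs_eval_basis hanti (fun j => (hρ₁ j).2) (degree_T_comp_lt d (2 / (1 - ε)))
      fun j => eval_T_comp_node hr.ne' j.is_le]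
    have : 2 / (1 - ε) - 1 = (1 + ε) / (1 - ε) := by field_simp; ring
    simpa [eval_comp, this] using eval_T_le_two_rpow hε hε₂ d
end

section
/- Let d ≥ 1 and q > d be integers, and let v_1, …, v_q ∈ ℂ^d. Then there exist indices i ≠ j such that |⟨v_i, v_j⟩| ≥ (1/d)·‖v_i‖₂·‖v_j‖₂. -/
/-!
If all the inner products were small, then for `d + 1` of the vectors, normalized, the Gram
matrix would be strictly diagonally dominant, hence nonsingular by Gershgorin's theorem. So these
`d + 1` vectors would be linearly independent in `ℂ^d`, which is impossible.
-/

open Finset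

open scoped InnerProductSpace

theorem sum_lt_one_of_card_mul_lt_one {α : Type*} {s : Finset α} {t : α → ℝ}
    (h : ∀ j ∈ s, #s * t j < 1) : ∑ j ∈ s, t j < 1 := by
  rcases s.eq_empty_or_nonempty with rfl | hs
  · simp
  have hcard : (0 : ℝ) < #s := by exact_mod_cast hs.card_pos
  refine lt_of_mul_lt_mul_left ?_ hcard.le
  calc (#s : ℝ) * ∑ j ∈ s, t j = ∑ j ∈ s, #s * t j := mul_sum _ _ _
    _ < ∑ _j ∈ s, 1 := sum_lt_sum_of_nonempty hs h
    _ = #s * 1 := by simp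

section InnerProductSpace

variable {𝕜 E ι : Type*} [RCLike 𝕜] [NormedAddCommGroup E] [InnerProductSpace 𝕜 E]

theorem norm_inner_inv_norm_smul (x y : E) :
    ‖⟪(‖x‖ : 𝕜)⁻¹ • x, (‖y‖ : 𝕜)⁻¹ • y⟫_𝕜‖ = ‖⟪x, y⟫_𝕜‖ / (‖x‖ * ‖y‖) := by
  simp only [inner_smul_left, inner_smul_right, norm_mul, norm_inv, RCLike.norm_conj,
    RCLike.norm_ofReal, abs_norm]
  field_simp

variable [Fintype ι] [DecidableEq ι]

theorem linearIndependent_of_sum_norm_inner_lt_one {u : ι → E} (hu : ∀ i, ‖u i‖ = 1)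
    (h : ∀ i, ∑ j ∈ univ.erase i, ‖⟪u i, u j⟫_𝕜‖ < 1) : LinearIndependent 𝕜 u :=
  Matrix.linearIndependent_of_det_gram_ne_zero <| det_ne_zero_of_sum_row_lt_diag fun i => by
    simpa [inner_self_eq_norm_sq_to_K, hu] using h i

theorem linearIndependent_of_card_mul_norm_inner_lt {v : ι → E} (hv : ∀ i, v i ≠ 0)
    (h : ∀ i j, i ≠ j → (Fintype.card ι - 1 : ℕ) * ‖⟪v i, v j⟫_𝕜‖ < ‖v i‖ * ‖v j‖) :
    LinearIndependent 𝕜 v := by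
  let w : ι → 𝕜ˣ := fun i => Units.mk0 (‖v i‖ : 𝕜)⁻¹ (by simpa using hv i)
  rw [← LinearIndependent.units_smul_iff v w]
  refine linearIndependent_of_sum_norm_inner_lt_one (fun i => ?_)
    fun i => sum_lt_one_of_card_mul_lt_one fun j hj => ?_
  · simp [w, Units.smul_def, norm_smul, hv i]
  · have hpos : 0 < ‖v i‖ * ‖v j‖ := mul_pos (norm_pos_iff.2 (hv i)) (norm_pos_iff.2 (hv j))
    simp only [Pi.smul_apply', Units.smul_def, Units.val_mk0, w, norm_inner_inv_norm_smul,
      card_erase_of_mem (mem_univ i), card_univ]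
    rw [mul_div_assoc', div_lt_one hpos]
    exact h i j (ne_of_mem_erase hj).symm

end InnerProductSpace

/-- Among `q > d` vectors in `ℂ^d` there are two distinct ones whose inner
product is at least `1/d` times the product of their norms. -/
theorem exists_large_inner_product (d q : ℕ) (hd : 1 ≤ d) (hq : d < q)
    (v : Fin q → EuclideanSpace ℂ (Fin d)) :
    ∃ i j : Fin q, i ≠ j ∧
      (1 / (d : ℝ)) * ‖v i‖ * ‖v j‖ ≤ ‖(inner ℂ (v i) (v j) : ℂ)‖ := by
  by_contra! hsmall
  have hdpos : (0 : ℝ) < d := by exact_mod_cast hd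
  have hv : ∀ i, v i ≠ 0 := by
    intro i hi
    obtain ⟨j, hji⟩ := Fintype.exists_ne_of_one_lt_card (by rw [Fintype.card_fin]; omega) i
    simpa [hi] using hsmall i j hji.symm
  have hli : LinearIndependent ℂ (v ∘ Fin.castLE hq) := by
    refine linearIndependent_of_card_mul_norm_inner_lt (fun k => hv _) fun k l hkl => ?_
    have hlt := hsmall _ _ ((Fin.castLE_injective hq).ne hkl)
    simp only [Function.comp_apply, Fintype.card_fin, Nat.succ_sub_one]
    calc (d : ℝ) * ‖⟪v _, v _⟫_ℂ‖ < d * (1 / d * ‖v _‖ * ‖v _‖) := by gcongr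
      _ = _ := by field_simp
  simpa using hli.fintype_card_le_finrank
end

section
/- Let 𝒜 be a finite abelian group, p a prime, n ≥ 1, and ā : 𝒜 → ℤ_p. Suppose the probability, over (u, v, w, x) chosen uniformly from { (u,v,w,x) ∈ (𝒜^n)⁴ : u + v = w + x }, that ā(u_i) + ā(v_i) = ā(w_i) + ā(x_i) in ℤ_p for every i = 1, …, n, is strictly greater than (1 − 1/|𝒜|³)^n. Then ā(u) + ā(v) = ā(w) + ā(x) for all u, v, w, x ∈ 𝒜 with u + v = w + x; consequently, there exist c ∈ ℤ_p and an additive group homomorphism φ : 𝒜 → ℤ_p such that ā(x) = c + φ(x) for all x ∈ 𝒜. -/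
open Finset

attribute [local instance] Classical.propDecidable

private lemma card_coord {α : Type*} [Fintype α] (n : ℕ) (P : α × α × α × α → Prop) :
    (Finset.univ.filter
      (fun w : (Fin n → α) × (Fin n → α) × (Fin n → α) × (Fin n → α) =>
        ∀ i, P (w.1 i, w.2.1 i, w.2.2.1 i, w.2.2.2 i))).card
    = (Finset.univ.filter P).card ^ n := by
  classical
  have : (Finset.univ.filter
      (fun w : (Fin n → α) × (Fin n → α) × (Fin n → α) × (Fin n → α) =>
        ∀ i, P (w.1 i, w.2.1 i, w.2.2.1 i, w.2.2.2 i))).card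
      = (Fintype.piFinset (fun _ : Fin n => Finset.univ.filter P)).card := by
    apply Finset.card_bij'
      (i := fun w _ => fun i => (w.1 i, w.2.1 i, w.2.2.1 i, w.2.2.2 i))
      (j := fun f _ => (fun i => (f i).1, fun i => (f i).2.1, fun i => (f i).2.2.1,
        fun i => (f i).2.2.2))
    case hi =>
      intro w hw
      simp only [Finset.mem_filter, Finset.mem_univ, true_and] at hw
      simp only [Fintype.mem_piFinset, Finset.mem_filter, Finset.mem_univ, true_and]
      exact hw
    case hj =>
      intro f hf
      simp only [Fintype.mem_piFinset, Finset.mem_filter, Finset.mem_univ, true_and] at hf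
      simp only [Finset.mem_filter, Finset.mem_univ, true_and]
      exact hf
    case left_inv => intro w hw; rfl
    case right_inv => intro f hf; rfl
  rw [this, Fintype.card_piFinset]
  simp

private lemma card_quad {α : Type*} [Fintype α] [AddCommGroup α] :
    (Finset.univ.filter
      (fun q : α × α × α × α => q.1 + q.2.1 = q.2.2.1 + q.2.2.2)).card
    = Fintype.card α ^ 3 := by
  classical
  have : Fintype.card α ^ 3 = (Finset.univ : Finset (α × α × α)).card := by
    simp [Fintype.card_prod]; ring
  rw [this]
  apply Finset.card_bij'
    (i := fun q _ => (q.1, q.2.1, q.2.2.1))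
    (j := fun t _ => (t.1, t.2.1, t.2.2, t.1 + t.2.1 - t.2.2))
  case hi => intro q hq; simp
  case hj =>
    intro t ht
    simp only [Finset.mem_filter, Finset.mem_univ, true_and]
    abel
  case left_inv =>
    intro q hq
    simp only [Finset.mem_filter, Finset.mem_univ, true_and] at hq
    ext <;> simp [hq]
  case right_inv => intro t ht; rfl

/-- If the coordinatewise additive quadruple equation for `ā` holds with
probability greater than `(1 − 1/|𝒜|³)^n` over uniform `(u,v,w,x)` with `u + v = w + x`,
then `ā` respects all additive quadruples and is a shift of a homomorphism. -/
theorem approximate_homomorphism_is_affine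
    (p : ℕ) (hp : p.Prime)
    {A : Type*} [Fintype A] [AddCommGroup A]
    (n : ℕ) (hn : 1 ≤ n) (abar : A → ZMod p)
    (hprob : (1 - 1 / (Fintype.card A : ℝ) ^ 3) ^ n <
      ((Finset.univ.filter
          (fun w : (Fin n → A) × (Fin n → A) × (Fin n → A) × (Fin n → A) =>
            w.1 + w.2.1 = w.2.2.1 + w.2.2.2 ∧
            ∀ i, abar (w.1 i) + abar (w.2.1 i)
              = abar (w.2.2.1 i) + abar (w.2.2.2 i))).card : ℝ)
        / ((Finset.univ.filter
            (fun w : (Fin n → A) × (Fin n → A) × (Fin n → A) × (Fin n → A) =>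
              w.1 + w.2.1 = w.2.2.1 + w.2.2.2)).card : ℝ)) :
    (∀ u v w x : A, u + v = w + x → abar u + abar v = abar w + abar x) ∧
    ∃ (c : ZMod p) (φ : A →+ ZMod p), ∀ x : A, abar x = c + φ x := by
  classical
  set P1 : A × A × A × A → Prop := fun q => q.1 + q.2.1 = q.2.2.1 + q.2.2.2 with hP1
  set P2 : A × A × A × A → Prop := fun q => q.1 + q.2.1 = q.2.2.1 + q.2.2.2 ∧
    abar q.1 + abar q.2.1 = abar q.2.2.1 + abar q.2.2.2 with hP2
  -- rewrite big cardinalities as powers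
  have hc0 : (Finset.univ.filter
      (fun w : (Fin n → A) × (Fin n → A) × (Fin n → A) × (Fin n → A) =>
        w.1 + w.2.1 = w.2.2.1 + w.2.2.2)).card
      = (Finset.univ.filter P1).card ^ n := by
    rw [← card_coord n P1]
    apply congrArg
    apply Finset.filter_congr
    intro w _
    simp only [hP1, funext_iff, Pi.add_apply]
  have hc1 : (Finset.univ.filter
      (fun w : (Fin n → A) × (Fin n → A) × (Fin n → A) × (Fin n → A) =>
        w.1 + w.2.1 = w.2.2.1 + w.2.2.2 ∧
        ∀ i, abar (w.1 i) + abar (w.2.1 i)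
          = abar (w.2.2.1 i) + abar (w.2.2.2 i))).card
      = (Finset.univ.filter P2).card ^ n := by
    have hset : (Finset.univ.filter
        (fun w : (Fin n → A) × (Fin n → A) × (Fin n → A) × (Fin n → A) =>
          w.1 + w.2.1 = w.2.2.1 + w.2.2.2 ∧
          ∀ i, abar (w.1 i) + abar (w.2.1 i)
            = abar (w.2.2.1 i) + abar (w.2.2.2 i)))
        = (Finset.univ.filter
          (fun w : (Fin n → A) × (Fin n → A) × (Fin n → A) × (Fin n → A) =>
            ∀ i, P2 (w.1 i, w.2.1 i, w.2.2.1 i, w.2.2.2 i))) := by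
      apply Finset.filter_congr
      intro w _
      simp only [hP2, funext_iff, Pi.add_apply]
      constructor
      · rintro ⟨hg, hb⟩ i; exact ⟨hg i, hb i⟩
      · intro h; exact ⟨fun i => (h i).1, fun i => (h i).2⟩
    rw [hset]
    convert card_coord n P2 using 2 <;> congr!
  have hS1 : (Finset.univ.filter P1).card = Fintype.card A ^ 3 := card_quad
  have hMpos : 0 < Fintype.card A ^ 3 := pow_pos Fintype.card_pos 3
  have key : ∀ u v w x : A, u + v = w + x → abar u + abar v = abar w + abar x := by
    by_contra hcon
    push_neg at hcon
    obtain ⟨u, v, w, x, huv, hne⟩ := hcon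
    have hsub : Finset.univ.filter P2 ⊆ Finset.univ.filter P1 :=
      by
        intro q hq
        simp only [Finset.mem_filter, Finset.mem_univ, true_and] at hq
        exact Finset.mem_filter.2 ⟨Finset.mem_univ q, hq.1⟩
    have hssub : (u, v, w, x) ∈ Finset.univ.filter P1 \ Finset.univ.filter P2 := by
      simp only [Finset.mem_sdiff, Finset.mem_filter, Finset.mem_univ, true_and, hP1, hP2]
      exact ⟨huv, fun h => hne h.2⟩
    have hlt : (Finset.univ.filter P2).card < (Finset.univ.filter P1).card := by
      apply Finset.card_lt_card
      rw [Finset.ssubset_iff_of_subset hsub]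
      exact ⟨_, (Finset.mem_sdiff.1 hssub).1, (Finset.mem_sdiff.1 hssub).2⟩
    set m := (Finset.univ.filter P2).card
    set M := (Finset.univ.filter P1).card
    have hMR : (0:ℝ) < (M:ℝ) := by exact_mod_cast hS1 ▸ hMpos
    have hm : (m:ℝ) ≤ (M:ℝ) - 1 := by
      have : m + 1 ≤ M := hlt
      have := Nat.cast_le (α := ℝ) |>.2 this
      push_cast at this; linarith
    have hratio : (m:ℝ) / M ≤ 1 - 1 / (Fintype.card A : ℝ) ^ 3 := by
      have hcard : ((Fintype.card A : ℝ)) ^ 3 = (M:ℝ) := by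
        rw [hS1]; push_cast; ring
      rw [hcard]
      rw [div_le_iff₀ hMR]
      field_simp
      linarith
    have hle : ((m:ℝ) ^ n) / ((M:ℝ) ^ n) ≤ (1 - 1 / (Fintype.card A : ℝ) ^ 3) ^ n := by
      rw [← div_pow]
      exact pow_le_pow_left₀ (by positivity) hratio n
    rw [hc0, hc1] at hprob
    push_cast at hprob
    exact absurd hprob (not_lt.2 hle)
  refine ⟨key, abar 0, AddMonoidHom.mk' (fun a => abar a - abar 0) ?_, ?_⟩
  · intro a b
    have h := key a b (a + b) 0 (by rw [add_zero])
    linear_combination -h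
  · intro x; simp
end

section
/- Let Σ, Γ, Φ be finite nonempty alphabets and μ a probability distribution on Σ×Γ×Φ with no ℤ-embeddings. Then there exists r ∈ ℕ such that for all x, x' ∈ Σ the following are equivalent: (i) α(x) = α(x') for every finite abelian group A and every embedding (α, β, γ) of μ into A; (ii) α(x) = α(x') for every integer q with 2 ≤ q ≤ r and every embedding (α, β, γ) of μ into the cyclic group ℤ_q. -/
open Finset

attribute [local instance] Classical.propDecidable

lemma exists_zmod_hom_ne_zero {A : Type} [AddCommGroup A] [Fintype A] (a : A) (ha : a ≠ 0) :
    ∃ q : ℕ, 2 ≤ q ∧ ∃ φ : A →+ ZMod q, φ a ≠ 0 := by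
  obtain ⟨ι, hι, p, hp, e, ⟨f⟩⟩ := AddCommGroup.equiv_directSum_zmod_of_finite A
  have hfa : f a ≠ 0 := by
    simpa using f.injective.ne_iff.mpr ha
  obtain ⟨i, hi⟩ : ∃ i, f a i ≠ 0 := by
    by_contra h
    push_neg at h
    exact hfa (DFinsupp.ext h)
  refine ⟨p i ^ e i, ?_, (DFinsupp.evalAddMonoidHom i).comp f.toAddMonoidHom, hi⟩
  have h1 : p i ^ e i ≠ 0 := pow_ne_zero _ (hp i).pos.ne'
  have h2 : p i ^ e i ≠ 1 := by
    intro h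
    haveI : Subsingleton (ZMod (p i ^ e i)) := by rw [h]; infer_instance
    exact hi (Subsingleton.elim _ _)
  omega

/-- If `μ` has no `ℤ`-embeddings, then there is a bound `r` such that two
symbols `x, x' ∈ Σ` agree under every embedding of `μ` into a finite abelian group if and
only if they agree under every embedding of `μ` into a cyclic group `ℤ_q` with `2 ≤ q ≤ r`. -/
theorem master_embedding_captures_all_embeddings
    {Xt Yt Zt : Type*} [Fintype Xt] [Fintype Yt] [Fintype Zt]
    [Nonempty Xt] [Nonempty Yt] [Nonempty Zt]
    (μ : Xt × Yt × Zt → ℝ) (hμ0 : ∀ p, 0 ≤ μ p) (hμ1 : ∑ p, μ p = 1)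
    (hemb : ∀ (α : Xt → ℤ) (β : Yt → ℤ) (γ : Zt → ℤ),
      (∀ x y z, 0 < μ (x, y, z) → α x + β y + γ z = 0) →
      ((∀ x x', α x = α x') ∧ (∀ y y', β y = β y') ∧ (∀ z z', γ z = γ z'))) :
    ∃ r : ℕ, ∀ x x' : Xt,
      ((∀ (A : Type) [AddCommGroup A] [Fintype A],
          ∀ (α : Xt → A) (β : Yt → A) (γ : Zt → A),
            (∀ a b c, 0 < μ (a, b, c) → α a + β b + γ c = 0) → α x = α x')
        ↔
        (∀ q : ℕ, 2 ≤ q → q ≤ r →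
          ∀ (α : Xt → ZMod q) (β : Yt → ZMod q) (γ : Zt → ZMod q),
            (∀ a b c, 0 < μ (a, b, c) → α a + β b + γ c = 0) → α x = α x')) := by
  classical
  set P : Xt → Xt → Prop := fun x x' =>
    ∀ (A : Type) [AddCommGroup A] [Fintype A],
      ∀ (α : Xt → A) (β : Yt → A) (γ : Zt → A),
        (∀ a b c, 0 < μ (a, b, c) → α a + β b + γ c = 0) → α x = α x' with hP
  -- if P fails, there is a cyclic counterexample
  have key : ∀ x x' : Xt, ¬ P x x' → ∃ q : ℕ, 2 ≤ q ∧
      ∃ (α : Xt → ZMod q) (β : Yt → ZMod q) (γ : Zt → ZMod q),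
        (∀ a b c, 0 < μ (a, b, c) → α a + β b + γ c = 0) ∧ α x ≠ α x' := by
    intro x x' hnp
    rw [hP] at hnp
    simp only [not_forall, Classical.not_imp] at hnp
    obtain ⟨A, _, _, α, β, γ, hsupp, hne⟩ := hnp
    obtain ⟨q, hq2, φ, hφ⟩ := exists_zmod_hom_ne_zero (α x - α x') (sub_ne_zero.mpr hne)
    refine ⟨q, hq2, φ ∘ α, φ ∘ β, φ ∘ γ, fun a b c h => ?_, ?_⟩
    · simp only [Function.comp_apply, ← map_add, hsupp a b c h, map_zero]
    · intro h
      apply hφ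
      rw [map_sub, sub_eq_zero]
      exact h
  choose! qf hqf2 using key
  refine ⟨Finset.univ.sup (fun p : Xt × Xt => qf p.1 p.2), fun x x' => ?_⟩
  constructor
  · intro hp q hq2 _ α β γ hsupp
    haveI : NeZero q := ⟨by omega⟩
    exact hp (ZMod q) α β γ hsupp
  · intro hr
    by_contra hnp
    obtain ⟨hq2, α, β, γ, hsupp, hne⟩ := hqf2 x x' hnp
    exact hne (hr (qf x x') hq2
      (Finset.le_sup (f := fun p : Xt × Xt => qf p.1 p.2) (Finset.mem_univ (x, x')))
      α β γ hsupp)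
end
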